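/- For pairwise distinct primitive types p, q, r, the sequent r, q, p → ((p^∘·q^∘)·r^∘)^∘ is not derivable in L^∘. -/

import Mathlib

/-!
Interpret types in the free monoid over `P`: a primitive type is a one-letter word, product is
concatenation of languages, the divisions are its residuals and `^∘` is closure under cyclic
rotation. Every rule of `L^∘`, cut included, is sound for this model. The antecedent
`r, q, p` denotes the single word `rqp` and the succedent the rotations of `pqr`, which for
pairwise distinct letters do not include `rqp`.
-/

/-- Types of the Lambek calculus with the cyclic shift `L^∘`, built from
primitive types `P` by `\` (`ldiv A B = A \ B`), `/` (`rdiv B A = B / A`),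
`·` (`mul`) and the cyclic shift `^∘` (`circ`). -/
inductive Fm (P : Type) : Type
  | prim : P → Fm P
  | ldiv : Fm P → Fm P → Fm P
  | rdiv : Fm P → Fm P → Fm P
  | mul  : Fm P → Fm P → Fm P
  | circ : Fm P → Fm P
deriving DecidableEq

open Fm

/-- Derivability of sequents in the Lambek calculus with the cyclic shift `L^∘`.
The Boolean flag indicates whether the rule (cut) may be used:
`Dv P true` is `L^∘` (with cut), `Dv P false` is its cut-free part. -/
inductive Dv (P : Type) : Bool → List (Fm P) → Fm P → Prop
  | ax (c : Bool) (A : Fm P) :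
      Dv P c [A] A
  | ldivL (c : Bool) (Γ Δ Pi : List (Fm P)) (A B C : Fm P) :
      Dv P c (Γ ++ B :: Δ) C → Dv P c Pi A → Pi ≠ [] →
      Dv P c (Γ ++ Pi ++ ldiv A B :: Δ) C
  | ldivR (c : Bool) (Pi : List (Fm P)) (A B : Fm P) :
      Dv P c (A :: Pi) B → Pi ≠ [] →
      Dv P c Pi (ldiv A B)
  | rdivL (c : Bool) (Γ Δ Pi : List (Fm P)) (A B C : Fm P) :
      Dv P c (Γ ++ B :: Δ) C → Dv P c Pi A → Pi ≠ [] →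
      Dv P c (Γ ++ rdiv B A :: (Pi ++ Δ)) C
  | rdivR (c : Bool) (Pi : List (Fm P)) (A B : Fm P) :
      Dv P c (Pi ++ [A]) B → Pi ≠ [] →
      Dv P c Pi (rdiv B A)
  | mulL (c : Bool) (Γ Δ : List (Fm P)) (A B C : Fm P) :
      Dv P c (Γ ++ A :: B :: Δ) C →
      Dv P c (Γ ++ mul A B :: Δ) C
  | mulR (c : Bool) (Pi Psi : List (Fm P)) (A B : Fm P) :
      Dv P c Pi A → Dv P c Psi B → Pi ≠ [] → Psi ≠ [] →
      Dv P c (Pi ++ Psi) (mul A B)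
  | circR (c : Bool) (Pi : List (Fm P)) (A : Fm P) :
      Dv P c Pi A →
      Dv P c Pi (circ A)
  | circL (c : Bool) (A B : Fm P) :
      Dv P c [B] (circ A) →
      Dv P c [circ B] (circ A)
  | circC (c : Bool) (Pi Psi : List (Fm P)) (A : Fm P) :
      Dv P c (Pi ++ Psi) (circ A) → Pi ≠ [] → Psi ≠ [] →
      Dv P c (Psi ++ Pi) (circ A)
  | cut (Γ Δ Pi : List (Fm P)) (A B : Fm P) :
      Dv P true Pi A → Dv P true (Γ ++ A :: Δ) B → Pi ≠ [] →
      Dv P true (Γ ++ Pi ++ Δ) B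


namespace Language

variable {α : Type*}

theorem mem_singleton {x y : List α} : x ∈ ({y} : Language α) ↔ x = y :=
  Iff.rfl

theorem singleton_mul_singleton (x y : List α) :
    ({x} : Language α) * {y} = {x ++ y} :=
  Set.image2_singleton

def ldiv (l m : Language α) : Language α :=
  {w | ∀ u ∈ l, u ++ w ∈ m}

def rdiv (m l : Language α) : Language α :=
  {w | ∀ u ∈ l, w ++ u ∈ m}

theorem le_ldiv_iff {l m n : Language α} : n ≤ ldiv l m ↔ l * n ≤ m := by
  constructor
  · rintro h _ ⟨u, hu, w, hw, rfl⟩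
    exact h hw u hu
  · intro h w hw u hu
    exact h ⟨u, hu, w, hw, rfl⟩

theorem le_rdiv_iff {l m n : Language α} : n ≤ rdiv m l ↔ n * l ≤ m := by
  constructor
  · rintro h _ ⟨w, hw, u, hu, rfl⟩
    exact h hw u hu
  · intro h w hw u hu
    exact h ⟨w, hw, u, hu, rfl⟩

theorem mul_ldiv_le (l m : Language α) : l * ldiv l m ≤ m :=
  le_ldiv_iff.mp le_rfl

theorem rdiv_mul_le (l m : Language α) : rdiv m l * l ≤ m :=
  le_rdiv_iff.mp le_rfl

def rotClosure : ClosureOperator (Language α) :=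
  .mk₂ (fun l => {w | ∃ u ∈ l, u ~r w}) (fun _ w hw => ⟨w, hw, .refl w⟩)
    fun _ _ hle _ ⟨_, hv, hvw⟩ =>
      let ⟨u, hu, huv⟩ := hle hv
      ⟨u, hu, huv.trans hvw⟩

theorem mem_rotClosure {l : Language α} {w : List α} :
    w ∈ rotClosure l ↔ ∃ u ∈ l, u ~r w :=
  Iff.rfl

theorem mul_le_rotClosure_mul (l m : Language α) : l * m ≤ rotClosure (m * l) := by
  rintro _ ⟨a, ha, b, hb, rfl⟩
  exact ⟨b ++ a, ⟨b, hb, a, ha, rfl⟩, List.isRotated_append⟩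

theorem mem_rotClosure_singleton {x w : List α} : w ∈ rotClosure ({x} : Language α) ↔ x ~r w := by
  simp [mem_rotClosure, mem_singleton]

theorem rotClosure_singleton_singleton (a : α) : rotClosure ({[a]} : Language α) = {[a]} := by
  ext w
  rw [mem_rotClosure_singleton, List.isRotated_singleton_iff', mem_singleton, eq_comm]

end Language

theorem List.eq_or_eq_or_eq_of_isRotated_reverse {α : Type*} {a b c : α}
    (h : [a, b, c] ~r [c, b, a]) : a = b ∨ b = c ∨ a = c := by
  rw [← List.mem_cyclicPermutations_iff] at h
  simp [List.cyclicPermutations] at h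
  tauto

namespace Fm

variable {P : Type}

def denote : Fm P → Language P
  | prim a => {[a]}
  | ldiv A B => A.denote.ldiv B.denote
  | rdiv B A => B.denote.rdiv A.denote
  | mul A B => A.denote * B.denote
  | circ A => Language.rotClosure A.denote

end Fm

open Fm Language in
theorem Dv.prod_denote_le {P : Type} {c : Bool} {Γ : List (Fm P)} {A : Fm P}
    (h : Dv P c Γ A) : (Γ.map denote).prod ≤ A.denote := by
  induction h with
  | ax => simp
  | ldivL _ Γ Δ Pi A B C _ _ _ ih ihPi =>
    simp only [List.map_append, List.map_cons, List.prod_append, List.prod_cons,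
      List.append_assoc] at ih ⊢
    rw [← mul_assoc (Pi.map denote).prod]
    refine le_trans ?_ ih
    gcongr
    exact (mul_le_mul_left ihPi _).trans (mul_ldiv_le _ _)
  | ldivR _ _ _ _ _ _ ih =>
    exact le_ldiv_iff.mpr (by simpa using ih)
  | rdivL _ Γ Δ Pi A B C _ _ _ ih ihPi =>
    simp only [List.map_append, List.map_cons, List.prod_append, List.prod_cons] at ih ⊢
    rw [← mul_assoc (rdiv B A).denote]
    refine le_trans ?_ ih
    gcongr
    exact (mul_le_mul_right ihPi _).trans (rdiv_mul_le _ _)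
  | rdivR _ _ _ _ _ _ ih =>
    exact le_rdiv_iff.mpr (by simpa using ih)
  | mulL _ _ _ _ _ _ _ ih =>
    simpa [mul_assoc, denote] using ih
  | mulR _ _ _ _ _ _ _ _ _ ih₁ ih₂ =>
    simpa [denote] using mul_le_mul' ih₁ ih₂
  | circR _ _ _ _ ih =>
    exact ih.trans (rotClosure.le_closure _)
  | circL _ _ _ _ ih =>
    simpa [denote, ← rotClosure.le_closure_iff] using ih
  | circC _ Pi Psi _ _ _ _ ih =>
    simp only [List.map_append, List.prod_append] at ih ⊢
    exact (mul_le_rotClosure_mul _ _).trans (rotClosure.le_closure_iff.mp ih)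
  | cut Γ Δ Pi A B _ _ _ ihPi ih =>
    simp only [List.map_append, List.map_cons, List.prod_append, List.prod_cons,
      List.append_assoc] at ih ⊢
    exact le_trans (by gcongr) ih

open Fm in
/-- For pairwise distinct primitive types `p`, `q`, `r`, the sequent
`r, q, p → ((p^∘·q^∘)·r^∘)^∘` is not derivable in `L^∘`. -/
theorem Lcirc_underivable (P : Type) (p q r : P)
    (hpq : p ≠ q) (hqr : q ≠ r) (hpr : p ≠ r) :
    ¬ Dv P true [prim r, prim q, prim p]
        (circ (mul (mul (circ (prim p)) (circ (prim q))) (circ (prim r)))) := by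
  intro h
  have hle := h.prod_denote_le
  simp only [List.map_cons, List.map_nil, List.prod_cons, List.prod_nil, mul_one, denote,
    Language.rotClosure_singleton_singleton, Language.singleton_mul_singleton, List.cons_append,
    List.nil_append] at hle
  have hmem : [r, q, p] ∈ Language.rotClosure ({[p, q, r]} : Language P) :=
    hle (Language.mem_singleton.mpr rfl)
  have hrot := Language.mem_rotClosure_singleton.mp hmem
  exact (List.eq_or_eq_or_eq_of_isRotated_reverse hrot).elim hpq (Or.elim · hqr hpr)
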